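/- Assume the abstract VHI data hypotheses with α_Ψ < m_A, and assume additionally that A is a potential operator, i.e., there exists a functional F_A : V → ℝ such that for all u, v ∈ V, the limit as t → 0 of (F_A(u + t v) − F_A(u))/t exists and equals ⟨Au, v⟩. Define the energy functional E(v) := F_A(v) + Φ(v) + Ψ(v) − ⟨f, v⟩ for v ∈ V. Then the minimization problem: find u ∈ K with E(u) = inf{E(v) : v ∈ K} has a unique solution u ∈ K, and this u is also the unique solution of the variational-hemivariational inequality: u ∈ K and ⟨Au, v − u⟩ + Φ(v) − Φ(u) + Ψ⁰(u; v − u) ≥ ⟨f, v − u⟩ for all v ∈ K. -/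

import Mathlib

open Filter Topology RealInnerProductSpace

/-- The Clarke (generalized) directional derivative of `f` at `u` in direction `v`. -/
noncomputable def clarkeDeriv {X : Type*} [NormedAddCommGroup X] [NormedSpace ℝ X]
    (f : X → ℝ) (u v : X) : ℝ :=
  Filter.limsup (fun p : X × ℝ => (f (p.1 + p.2 • v) - f p.1) / p.2)
    ((𝓝 u) ×ˢ 𝓝[>] (0:ℝ))

/-!
The energy grows quadratically away from every point: the potential `F_A` of the strongly
monotone operator `A` exceeds its linearization by `m_A/2 ‖h‖²`, while a mean value argument
(Lebourg's theorem combined with the relaxed monotonicity of the Clarke derivative) shows that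
`Ψ (u + h) ≥ Ψ u + Ψ⁰(u; h) - α_Ψ/2 ‖h‖²`. Hence
`E v ≥ E u + R(u, v) + (m_A - α_Ψ)/2 ‖v - u‖²`, where `R(u, v) ≥ 0` on `K` is exactly the
variational-hemivariational inequality at `u`: its solutions are strict minimizers. Conversely
a minimizer solves it, by comparing `E` along segments of `K` with the difference quotients
defining `F_A` and `Ψ⁰`. For existence, the quadratic growth makes `E` bounded below and
strongly midpoint convex, so minimizing sequences are Cauchy, and `E` is lower semicontinuous.
-/

open Set

lemma le_of_forall_sub_le_mul_sq {G : ℝ → ℝ} {a b C : ℝ} (hab : a ≤ b)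
    (hG : ∀ s t, a ≤ s → s < t → t ≤ b → G t - G s ≤ C * (t - s) ^ 2) : G b ≤ G a := by
  rcases hab.eq_or_lt with rfl | hab
  · rfl
  have hbound : ∀ n : ℕ, 0 < n → G b - G a ≤ C * (b - a) ^ 2 / n := by
    intro n hn
    have hn' : (0 : ℝ) < n := Nat.cast_pos.2 hn
    set δ := (b - a) / n
    have hδ : 0 < δ := div_pos (sub_pos.2 hab) hn'
    have hnode : ∀ i : ℕ, i ≤ n → a ≤ a + i * δ ∧ a + i * δ ≤ b := fun i hi => by
      refine ⟨le_add_of_nonneg_right (by positivity), ?_⟩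
      have : (i : ℝ) * δ ≤ n * δ := by gcongr
      rw [mul_div_cancel₀ _ hn'.ne'] at this
      linarith
    calc G b - G a = ∑ i ∈ Finset.range n, (G (a + (i + 1 : ℕ) * δ) - G (a + i * δ)) := by
          rw [Finset.sum_range_sub (fun i : ℕ => G (a + i * δ)), mul_div_cancel₀ _ hn'.ne']
          simp
      _ ≤ ∑ _i ∈ Finset.range n, C * δ ^ 2 := by
          refine Finset.sum_le_sum fun i hi => ?_
          have hi := Finset.mem_range.1 hi
          have := hG _ _ (hnode i hi.le).1 (by push_cast; linarith) (hnode (i + 1) hi).2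
          rwa [show a + (i + 1 : ℕ) * δ - (a + i * δ) = δ by push_cast; ring] at this
      _ = C * (b - a) ^ 2 / n := by
          rw [Finset.sum_const, Finset.card_range, nsmul_eq_mul]
          simp only [δ]
          field_simp
  have hlim : Tendsto (fun n : ℕ => C * (b - a) ^ 2 / n) atTop (𝓝 0) :=
    tendsto_const_div_atTop_nhds_zero_nat _
  linarith [ge_of_tendsto hlim ((eventually_gt_atTop 0).mono hbound)]

section ClarkeDerivative

variable {X : Type*} [NormedAddCommGroup X] [NormedSpace ℝ X] {f : X → ℝ}

noncomputable def clarkeQuotient (f : X → ℝ) (v : X) (p : X × ℝ) : ℝ :=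
  (f (p.1 + p.2 • v) - f p.1) / p.2

lemma tendsto_fst_add_snd_smul (x v : X) :
    Tendsto (fun p : X × ℝ => p.1 + p.2 • v) (𝓝 x ×ˢ 𝓝[>] 0) (𝓝 x) := by
  have hsnd : Tendsto (fun p : X × ℝ => p.2) (𝓝 x ×ˢ 𝓝[>] 0) (𝓝 0) :=
    tendsto_snd.mono_right nhdsWithin_le_nhds
  simpa using tendsto_fst.add (hsnd.smul_const v)

lemma LocallyLipschitz.exists_eventually_abs_clarkeQuotient_le (hf : LocallyLipschitz f)
    (x : X) : ∃ C, ∀ v, ∀ᶠ p in 𝓝 x ×ˢ 𝓝[>] 0, |clarkeQuotient f v p| ≤ C * ‖v‖ := by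
  obtain ⟨L, s, hs, hL⟩ := hf x
  refine ⟨L, fun v => ?_⟩
  filter_upwards [(tendsto_fst (g := 𝓝[>] (0:ℝ))).eventually hs,
    (tendsto_fst_add_snd_smul x v).eventually hs, tendsto_snd.eventually self_mem_nhdsWithin]
    with p hp hpv (hp₂ : 0 < p.2)
  rw [clarkeQuotient, abs_div, abs_of_pos hp₂, div_le_iff₀ hp₂, ← Real.dist_eq]
  calc dist (f (p.1 + p.2 • v)) (f p.1) ≤ L * dist (p.1 + p.2 • v) p.1 :=
        hL.dist_le_mul _ hpv _ hp
    _ = L * ‖v‖ * p.2 := by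
        rw [dist_eq_norm, add_sub_cancel_left, norm_smul, Real.norm_of_nonneg hp₂.le]; ring

lemma LocallyLipschitz.isBoundedUnder_abs_clarkeQuotient_comp (hf : LocallyLipschitz f)
    {α : Type*} {G : Filter α} {m : α → X × ℝ} {x : X} (hm : Tendsto m G (𝓝 x ×ˢ 𝓝[>] 0))
    (v : X) : G.IsBoundedUnder (· ≤ ·) fun a => |clarkeQuotient f v (m a)| := by
  obtain ⟨C, hC⟩ := hf.exists_eventually_abs_clarkeQuotient_le x
  exact isBoundedUnder_of_eventually_le (hm.eventually (hC v))

lemma LocallyLipschitz.limsup_clarkeQuotient_comp_le (hf : LocallyLipschitz f)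
    {α : Type*} {G : Filter α} [G.NeBot] {m : α → X × ℝ} {x : X}
    (hm : Tendsto m G (𝓝 x ×ˢ 𝓝[>] 0)) (v : X) :
    limsup (fun a => clarkeQuotient f v (m a)) G ≤ clarkeDeriv f x v := by
  have hG := isBoundedUnder_le_abs.1 (hf.isBoundedUnder_abs_clarkeQuotient_comp hm v)
  have hF := isBoundedUnder_le_abs.1
    (hf.isBoundedUnder_abs_clarkeQuotient_comp (tendsto_id (x := 𝓝 x ×ˢ 𝓝[>] 0)) v)
  exact limsup_le_limsup_of_le hm hG.2.isCoboundedUnder_le hF.1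

lemma LocallyLipschitz.le_clarkeDeriv_of_tendsto (hf : LocallyLipschitz f)
    {α : Type*} {G : Filter α} [G.NeBot] {m : α → X × ℝ} {x v : X}
    (hm : Tendsto m G (𝓝 x ×ˢ 𝓝[>] 0)) {r : α → ℝ} {c : ℝ} (hr : Tendsto r G (𝓝 c))
    (hle : ∀ᶠ a in G, r a ≤ clarkeQuotient f v (m a)) : c ≤ clarkeDeriv f x v :=
  calc c = limsup r G := hr.limsup_eq.symm
    _ ≤ limsup (fun a => clarkeQuotient f v (m a)) G :=
        limsup_le_limsup hle hr.isBoundedUnder_ge.isCoboundedUnder_le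
          (isBoundedUnder_le_abs.1 (hf.isBoundedUnder_abs_clarkeQuotient_comp hm v)).1
    _ ≤ clarkeDeriv f x v := hf.limsup_clarkeQuotient_comp_le hm v

lemma LocallyLipschitz.exists_neg_mul_norm_le_clarkeDeriv (hf : LocallyLipschitz f) (x : X) :
    ∃ C, ∀ v, -(C * ‖v‖) ≤ clarkeDeriv f x v := by
  obtain ⟨C, hC⟩ := hf.exists_eventually_abs_clarkeQuotient_le x
  exact ⟨C, fun v => hf.le_clarkeDeriv_of_tendsto tendsto_id tendsto_const_nhds
    ((hC v).mono fun p hp => (abs_le.1 hp).1)⟩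

lemma LocallyLipschitz.mul_clarkeDeriv_le (hf : LocallyLipschitz f) (x v : X) {c : ℝ}
    (hc : 0 < c) : c * clarkeDeriv f x v ≤ clarkeDeriv f x (c • v) := by
  have hb := isBoundedUnder_le_abs.1
    (hf.isBoundedUnder_abs_clarkeQuotient_comp (tendsto_id (x := 𝓝 x ×ˢ 𝓝[>] 0)) v)
  have hm : Tendsto (fun p : X × ℝ => (p.1, c⁻¹ * p.2)) (𝓝 x ×ˢ 𝓝[>] 0) (𝓝 x ×ˢ 𝓝[>] 0) :=
    tendsto_fst.prodMk <| (tendsto_iff_comap.2 (comap_mulLeft_nhdsGT_zero (inv_pos.2 hc)).ge).comp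
      tendsto_snd
  calc c * clarkeDeriv f x v = limsup (fun p => c * clarkeQuotient f v p) (𝓝 x ×ˢ 𝓝[>] 0) :=
        (monotone_mul_left_of_nonneg hc.le).map_limsup_of_continuousAt _
          (continuous_const_mul c).continuousAt hb.1 hb.2.isCoboundedUnder_le
    _ = limsup (fun p => clarkeQuotient f (c • v) (p.1, c⁻¹ * p.2)) (𝓝 x ×ˢ 𝓝[>] 0) := by
        congr 1; funext p
        simp only [clarkeQuotient, smul_smul]
        field_simp
    _ ≤ clarkeDeriv f x (c • v) := hf.limsup_clarkeQuotient_comp_le hm _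

lemma LocallyLipschitz.clarkeDeriv_add_clarkeDeriv_neg_nonneg (hf : LocallyLipschitz f)
    (x v : X) : 0 ≤ clarkeDeriv f x v + clarkeDeriv f x (-v) := by
  have hm : Tendsto (fun p : X × ℝ => (p.1 + p.2 • v, p.2)) (𝓝 x ×ˢ 𝓝[>] 0)
      (𝓝 x ×ˢ 𝓝[>] 0) := (tendsto_fst_add_snd_smul x v).prodMk tendsto_snd
  have hb := isBoundedUnder_le_abs.1
    (hf.isBoundedUnder_abs_clarkeQuotient_comp (tendsto_id (x := 𝓝 x ×ˢ 𝓝[>] 0)) v)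
  refine le_of_forall_pos_le_add fun ε hε => ?_
  have hlt : ∀ᶠ p in 𝓝 x ×ˢ 𝓝[>] 0, clarkeQuotient f v p < clarkeDeriv f x v + ε :=
    eventually_lt_of_limsup_lt (lt_add_of_pos_right _ hε) hb.1
  have := hf.le_clarkeDeriv_of_tendsto hm tendsto_const_nhds (v := -v)
    (c := -(clarkeDeriv f x v + ε)) <| hlt.mono fun p hp => by
      have : clarkeQuotient f (-v) (p.1 + p.2 • v, p.2) = -clarkeQuotient f v p := by
        simp only [clarkeQuotient, smul_neg, add_neg_cancel_right, ← neg_div, neg_sub]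
      linarith
  linarith

lemma LocallyLipschitz.exists_sub_le_mul_clarkeDeriv_neg (hf : LocallyLipschitz f) (u h : X)
    {s t : ℝ} (hst : s < t) :
    ∃ c ∈ Ioo s t, f (u + s • h) - f (u + t • h) ≤ (t - s) * clarkeDeriv f (u + c • h) (-h) := by
  set M := (f (u + t • h) - f (u + s • h)) / (t - s)
  have hts : 0 < t - s := sub_pos.2 hst
  set θ : ℝ → ℝ := fun τ => f (u + τ • h) - τ * M
  have hθ : Continuous θ := by
    have := hf.continuous
    fun_prop
  have hθst : θ s = θ t := by
    simp only [θ, M]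
    field_simp
    ring
  -- at an interior extremum `c` of `θ`, one-sided difference quotients of `f` at `u + c • h`
  -- in direction `-h` are at least `-M`
  obtain ⟨c, hc, hext⟩ := exists_Ioo_extr_on_Icc hst hθ.continuousOn hθst
  refine ⟨c, hc, ?_⟩
  suffices -M ≤ clarkeDeriv f (u + c • h) (-h) by
    calc f (u + s • h) - f (u + t • h) = (t - s) * -M := by simp only [M]; field_simp; ring
      _ ≤ _ := mul_le_mul_of_nonneg_left this hts.le
  have hτ : ∀ᶠ τ in 𝓝[>] (0 : ℝ), 0 < τ ∧ τ < c - s ∧ τ < t - c := by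
    filter_upwards [Ioo_mem_nhdsGT (sub_pos.2 hc.1), Ioo_mem_nhdsGT (sub_pos.2 hc.2)]
      with τ h₁ h₂ using ⟨h₁.1, h₁.2, h₂.2⟩
  rcases hext with hmin | hmax
  · refine hf.le_clarkeDeriv_of_tendsto (m := fun τ => (u + c • h, τ))
      (tendsto_const_nhds.prodMk tendsto_id) tendsto_const_nhds (hτ.mono fun τ hτ => ?_)
    have : θ c ≤ θ (c - τ) := hmin (show c - τ ∈ Icc s t by constructor <;> linarith [hc.2])
    simp only [θ] at this
    rw [clarkeQuotient, le_div_iff₀ hτ.1, show u + c • h + τ • -h = u + (c - τ) • h by module]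
    linarith
  · have hm : Tendsto (fun τ : ℝ => (u + (c + τ) • h, τ)) (𝓝[>] 0)
        (𝓝 (u + c • h) ×ˢ 𝓝[>] 0) := by
      refine Tendsto.prodMk ?_ tendsto_id
      have : Continuous fun τ : ℝ => u + (c + τ) • h := by fun_prop
      simpa using this.continuousAt.tendsto.mono_left (nhdsWithin_le_nhds (a := (0 : ℝ)))
    refine hf.le_clarkeDeriv_of_tendsto hm tendsto_const_nhds (hτ.mono fun τ hτ => ?_)
    have : θ (c + τ) ≤ θ c := hmax (show c + τ ∈ Icc s t by constructor <;> linarith [hc.1])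
    simp only [θ] at this
    rw [clarkeQuotient, le_div_iff₀ hτ.1, show u + (c + τ) • h + τ • -h = u + c • h by module]
    linarith

lemma LocallyLipschitz.add_clarkeDeriv_sub_le {α : ℝ} (hf : LocallyLipschitz f) (hα : 0 ≤ α)
    (hmon : ∀ v₁ v₂ : X,
      clarkeDeriv f v₁ (v₂ - v₁) + clarkeDeriv f v₂ (v₁ - v₂) ≤ α * ‖v₁ - v₂‖ ^ 2)
    (u h : X) : f u + clarkeDeriv f u h - α / 2 * ‖h‖ ^ 2 ≤ f (u + h) := by
  set P := clarkeDeriv f u h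
  set N := ‖h‖ ^ 2
  have hslope : ∀ c > 0, clarkeDeriv f (u + c • h) (-h) ≤ α * c * N - P := by
    intro c hc
    have hpair := hmon u (u + c • h)
    rw [add_sub_cancel_left, show u - (u + c • h) = c • -h by module, norm_smul, norm_neg,
      Real.norm_of_nonneg hc.le] at hpair
    have h₁ := hf.mul_clarkeDeriv_le u h hc
    have h₂ := hf.mul_clarkeDeriv_le (u + c • h) (-h) hc
    nlinarith
  -- `G` below has increments `G t - G s ≤ α N (t - s)² / 2`, so it cannot increase
  have := le_of_forall_sub_le_mul_sq (G := fun τ => τ * P - α / 2 * N * τ ^ 2 - f (u + τ • h))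
    (C := α / 2 * N) zero_le_one fun s t hs hst _ => by
      obtain ⟨c, ⟨hsc, hct⟩, hc⟩ := hf.exists_sub_le_mul_clarkeDeriv_neg u h hst
      have h₁ := mul_le_mul_of_nonneg_left (hslope c (hs.trans_lt hsc)) (sub_pos.2 hst).le
      have h₂ : 0 ≤ α * N * (t - s) * (t - c) := by
        have := sub_pos.2 hst; have := sub_pos.2 hct; positivity
      nlinarith
  simp only [zero_smul, add_zero, one_smul, zero_mul, one_pow, mul_one, zero_pow two_ne_zero,
    mul_zero, sub_zero, one_mul, zero_sub] at this
  linarith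

end ClarkeDerivative

section Potential

variable {V : Type*} [NormedAddCommGroup V] [NormedSpace ℝ V]

def IsPotential (F : V → ℝ) (A : V → V →L[ℝ] ℝ) : Prop :=
  ∀ u v : V, Tendsto (fun t : ℝ => (F (u + t • v) - F u) / t) (𝓝[≠] 0) (𝓝 (A u v))

variable {F : V → ℝ} {A : V → V →L[ℝ] ℝ}

lemma IsPotential.hasDerivAt_line (hF : IsPotential F A) (u h : V) (t : ℝ) :
    HasDerivAt (fun τ : ℝ => F (u + τ • h)) (A (u + t • h) h) t := by
  rw [hasDerivAt_iff_tendsto_slope_zero]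
  refine (hF (u + t • h) h).congr fun τ => ?_
  rw [add_smul, ← add_assoc, smul_eq_mul, inv_mul_eq_div]

lemma IsPotential.add_apply_add_le {m : ℝ} (hF : IsPotential F A)
    (hA : ∀ v₁ v₂ : V, (A v₁ - A v₂) (v₁ - v₂) ≥ m * ‖v₁ - v₂‖ ^ 2) (u h : V) :
    F u + A u h + m / 2 * ‖h‖ ^ 2 ≤ F (u + h) := by
  set g : ℝ → ℝ := fun t => F (u + t • h) - t * A u h - m / 2 * ‖h‖ ^ 2 * t ^ 2
  have hg : ∀ t, HasDerivAt g (A (u + t • h) h - A u h - m * ‖h‖ ^ 2 * t) t := fun t => by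
    refine (((hF.hasDerivAt_line u h t).sub (hasDerivAt_mul_const (A u h))).sub
      ((hasDerivAt_pow 2 t).const_mul (m / 2 * ‖h‖ ^ 2))).congr_deriv ?_
    push_cast
    ring
  have hmono : MonotoneOn g (Icc 0 1) := by
    refine monotoneOn_of_hasDerivWithinAt_nonneg (convex_Icc 0 1)
      (fun t _ => (hg t).continuousAt.continuousWithinAt) (fun t _ => (hg t).hasDerivWithinAt)
      fun t ht => ?_
    rw [interior_Icc] at ht
    have := hA (u + t • h) u
    rw [add_sub_cancel_left, map_smul, smul_eq_mul, norm_smul, Real.norm_of_nonneg ht.1.le,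
      sub_apply] at this
    nlinarith [ht.1]
  have := hmono (left_mem_Icc.2 zero_le_one) (right_mem_Icc.2 zero_le_one) zero_le_one
  simp only [g, zero_smul, add_zero, one_smul, zero_mul, one_pow, mul_one, zero_pow two_ne_zero,
    mul_zero, sub_zero, one_mul] at this
  linarith

lemma IsPotential.lowerSemicontinuous {m : ℝ} (hF : IsPotential F A)
    (hA : ∀ v₁ v₂ : V, (A v₁ - A v₂) (v₁ - v₂) ≥ m * ‖v₁ - v₂‖ ^ 2) :
    LowerSemicontinuous F := fun u y hy => by
  -- `F` dominates a continuous function touching it at `u`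
  have hcont : ContinuousAt (fun v => F u + A u (v - u) + m / 2 * ‖v - u‖ ^ 2) u := by fun_prop
  refine (hcont.lowerSemicontinuousAt y (by simpa using hy)).mono fun v hv => hv.trans_le ?_
  simpa using hF.add_apply_add_le hA u (v - u)

end Potential

section Minimization

variable {V : Type*} [NormedAddCommGroup V] [NormedSpace ℝ V]

lemma ConvexOn.exists_sub_mul_norm_sub_le {Φ : V → ℝ} (hΦ : ConvexOn ℝ univ Φ) {x₀ : V}
    (hcont : ContinuousAt Φ x₀) : ∃ C, ∀ v, Φ x₀ - C * ‖v - x₀‖ ≤ Φ v := by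
  obtain ⟨δ, hδ, hball⟩ := Metric.continuousAt_iff.1 hcont 1 one_pos
  refine ⟨2 / δ, fun v => ?_⟩
  rcases eq_or_ne v x₀ with rfl | hv
  · simp
  have hr : 0 < ‖v - x₀‖ := norm_pos_iff.2 (sub_ne_zero.2 hv)
  set s := δ / (2 * ‖v - x₀‖)
  have hs : 0 < s := by positivity
  -- slopes of the convex function `τ ↦ Φ (x₀ + τ • (v - x₀))` on `-s < 0 < 1`
  have hline : ConvexOn ℝ univ (Φ ∘ AffineMap.lineMap (k := ℝ) x₀ v) := by
    simpa using hΦ.comp_affineMap (AffineMap.lineMap (k := ℝ) x₀ v)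
  have hslope := hline.slope_mono_adjacent (mem_univ (-s)) (mem_univ 1) (neg_neg_of_pos hs)
    zero_lt_one
  have hnear : Φ (AffineMap.lineMap (k := ℝ) x₀ v (-s)) < Φ x₀ + 1 := by
    have hdist : dist (AffineMap.lineMap (k := ℝ) x₀ v (-s)) x₀ < δ := by
      rw [dist_lineMap_left, norm_neg, Real.norm_of_nonneg hs.le, dist_comm, dist_eq_norm]
      simp only [s]
      field_simp
      linarith
    linarith [(abs_lt.1 (Real.dist_eq _ _ ▸ hball hdist)).2]
  simp only [Function.comp_apply, AffineMap.lineMap_apply_zero, AffineMap.lineMap_apply_one,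
    sub_neg_eq_add, zero_add, sub_zero, div_one] at hslope
  rw [div_le_iff₀ hs] at hslope
  have : 2 / δ * ‖v - x₀‖ * s = 1 := by simp only [s]; field_simp
  nlinarith

theorem existsUnique_isMinOn_of_midpoint_le [CompleteSpace V] {K : Set V} (hKne : K.Nonempty)
    (hKcl : IsClosed K) (hKcv : Convex ℝ K) {E : V → ℝ} (hE : LowerSemicontinuous E)
    (hbdd : BddBelow (E '' K)) {c : ℝ} (hc : 0 < c)
    (hmid : ∀ x ∈ K, ∀ y ∈ K, E (midpoint ℝ x y) ≤ (E x + E y) / 2 - c * ‖x - y‖ ^ 2) :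
    ∃! u, u ∈ K ∧ IsMinOn E K u := by
  set d := sInf (E '' K)
  have hd : ∀ v ∈ K, d ≤ E v := fun v hv => csInf_le hbdd (mem_image_of_mem E hv)
  have hmidK : ∀ x ∈ K, ∀ y ∈ K, c * ‖x - y‖ ^ 2 ≤ (E x + E y) / 2 - d := fun x hx y hy => by
    linarith [hmid x hx y hy, hd _ (hKcv.midpoint_mem hx hy)]
  have hseq : ∀ n : ℕ, ∃ w ∈ K, E w < d + 1 / (n + 1) := fun n => by
    obtain ⟨_, ⟨w, hw, rfl⟩, hlt⟩ :=
      exists_lt_of_csInf_lt (hKne.image E) (lt_add_of_pos_right d Nat.one_div_pos_of_nat)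
    exact ⟨w, hw, hlt⟩
  choose w hwK hwE using hseq
  have hcauchy : CauchySeq w := by
    refine Metric.cauchySeq_iff'.2 fun ε hε => ?_
    obtain ⟨N, hN⟩ := exists_nat_one_div_lt (mul_pos hc (pow_pos hε 2))
    refine ⟨N, fun n hn => ?_⟩
    have hnN : 1 / ((n : ℝ) + 1) ≤ 1 / ((N : ℝ) + 1) := Nat.one_div_le_one_div hn
    have := hmidK _ (hwK n) _ (hwK N)
    rw [dist_eq_norm]
    refine lt_of_pow_lt_pow_left₀ 2 hε.le ?_
    nlinarith [hwE n, hwE N]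
  obtain ⟨u, hu⟩ := cauchySeq_tendsto_of_complete hcauchy
  have huK : u ∈ K := hKcl.mem_of_tendsto hu (Eventually.of_forall hwK)
  have hEu : E u ≤ d := by
    by_contra! hlt
    obtain ⟨y, hdy, hyu⟩ := exists_between hlt
    obtain ⟨N, hN⟩ := exists_nat_one_div_lt (sub_pos.2 hdy)
    obtain ⟨n, hyn, hn⟩ := ((hu.eventually (hE u y hyu)).and (eventually_ge_atTop N)).exists
    have hnN : 1 / ((n : ℝ) + 1) ≤ 1 / ((N : ℝ) + 1) := Nat.one_div_le_one_div hn
    linarith [hwE n]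
  refine ⟨u, ⟨huK, fun v hv => hEu.trans (hd v hv)⟩, fun v ⟨hvK, hv⟩ => ?_⟩
  have hvu : E v ≤ E u := hv huK
  have : ‖v - u‖ ^ 2 ≤ 0 := by nlinarith [hmidK v hvK u huK, hd v hvK]
  simpa [sub_eq_zero] using (pow_eq_zero_iff two_ne_zero).1 (le_antisymm this (sq_nonneg _))

end Minimization

section Energy

variable {V : Type*} [NormedAddCommGroup V] [NormedSpace ℝ V] {K : Set V}
  {A : V → V →L[ℝ] ℝ} {FA Φ Ψ E : V → ℝ} {f : V →L[ℝ] ℝ}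

lemma energy_lower_bound {mA αΨ : ℝ} (hFA : IsPotential FA A)
    (hAmon : ∀ v₁ v₂ : V, (A v₁ - A v₂) (v₁ - v₂) ≥ mA * ‖v₁ - v₂‖ ^ 2)
    (hΨ : LocallyLipschitz Ψ) (hαΨ : 0 ≤ αΨ)
    (hΨmon : ∀ v₁ v₂ : V,
      clarkeDeriv Ψ v₁ (v₂ - v₁) + clarkeDeriv Ψ v₂ (v₁ - v₂) ≤ αΨ * ‖v₁ - v₂‖ ^ 2)
    (hE : ∀ v, E v = FA v + Φ v + Ψ v - f v) (u v : V) :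
    E u + (A u (v - u) + Φ v - Φ u + clarkeDeriv Ψ u (v - u) - f (v - u)) +
      (mA - αΨ) / 2 * ‖v - u‖ ^ 2 ≤ E v := by
  have hFAuv := hFA.add_apply_add_le hAmon u (v - u)
  have hΨuv := hΨ.add_clarkeDeriv_sub_le hαΨ hΨmon u (v - u)
  rw [add_sub_cancel] at hFAuv hΨuv
  rw [hE, hE]
  linarith [map_sub f v u]

lemma energy_midpoint_le {c : ℝ}
    (hgrowth : ∀ u v, E u + (A u (v - u) + Φ v - Φ u + clarkeDeriv Ψ u (v - u) - f (v - u)) +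
      c * ‖v - u‖ ^ 2 ≤ E v)
    (hΦ : ConvexOn ℝ univ Φ) (hΨ : LocallyLipschitz Ψ) (x y : V) :
    E (midpoint ℝ x y) ≤ (E x + E y) / 2 - c / 4 * ‖x - y‖ ^ 2 := by
  set m := midpoint ℝ x y
  have hx : x - m = (2⁻¹ : ℝ) • (x - y) := by
    simp only [m, midpoint_eq_smul_add, invOf_eq_inv]; module
  have hy : y - m = -(x - m) := by
    simp only [m, midpoint_eq_smul_add, invOf_eq_inv]; module
  have hΦm : Φ m ≤ 2⁻¹ * Φ x + 2⁻¹ * Φ y := by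
    simpa [m, midpoint_eq_smul_add, smul_add] using
      hΦ.2 (mem_univ x) (mem_univ y) (by norm_num : (0 : ℝ) ≤ 2⁻¹) (by norm_num) (by norm_num)
  have hnorm : ‖x - m‖ ^ 2 = ‖x - y‖ ^ 2 / 4 := by
    rw [hx, norm_smul, mul_pow, Real.norm_of_nonneg (by norm_num)]; ring
  have hgx := hgrowth m x
  have hgy := hgrowth m y
  rw [hy, map_neg, map_neg, norm_neg] at hgy
  rw [hnorm] at hgx hgy
  linarith [hΨ.clarkeDeriv_add_clarkeDeriv_neg_nonneg m (x - m)]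

lemma bddBelow_range_energy {c : ℝ}
    (hgrowth : ∀ u v, E u + (A u (v - u) + Φ v - Φ u + clarkeDeriv Ψ u (v - u) - f (v - u)) +
      c * ‖v - u‖ ^ 2 ≤ E v)
    (hc : 0 < c) (hΦ : ConvexOn ℝ univ Φ) (hΦcont : Continuous Φ) (hΨ : LocallyLipschitz Ψ) :
    BddBelow (range E) := by
  obtain ⟨CΦ, hCΦ⟩ := hΦ.exists_sub_mul_norm_sub_le (hΦcont.continuousAt (x := 0))
  obtain ⟨CΨ, hCΨ⟩ := hΨ.exists_neg_mul_norm_le_clarkeDeriv 0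
  simp only [sub_zero] at hCΦ
  set C := ‖A 0‖ + CΦ + CΨ + ‖f‖
  refine ⟨E 0 - C ^ 2 / (4 * c), forall_mem_range.2 fun v => ?_⟩
  have hA := neg_le_of_abs_le ((A 0).le_opNorm v)
  have hf := le_of_abs_le (f.le_opNorm v)
  have hlin : E 0 - C * ‖v‖ + c * ‖v‖ ^ 2 ≤ E v := by
    have := hgrowth 0 v
    simp only [sub_zero] at this
    linarith [hCΦ v, hCΨ v, show C * ‖v‖ = (‖A 0‖ + CΦ + CΨ + ‖f‖) * ‖v‖ from rfl]
  have hsq : 0 ≤ (2 * c * ‖v‖ - C) ^ 2 / (4 * c) := by positivity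
  have : (2 * c * ‖v‖ - C) ^ 2 / (4 * c) = c * ‖v‖ ^ 2 - C * ‖v‖ + C ^ 2 / (4 * c) := by
    field_simp; ring
  linarith

lemma vhi_of_isMinOn (hK : Convex ℝ K) (hFA : IsPotential FA A) (hΦ : ConvexOn ℝ univ Φ)
    (hΨ : LocallyLipschitz Ψ) (hE : ∀ v, E v = FA v + Φ v + Ψ v - f v) {u : V} (hu : u ∈ K)
    (hmin : IsMinOn E K u) (v : V) (hv : v ∈ K) :
    A u (v - u) + Φ v - Φ u + clarkeDeriv Ψ u (v - u) ≥ f (v - u) := by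
  set h := v - u
  -- minimality along the segment from `u` to `v` bounds the Clarke quotients of `Ψ` at `u`
  have hr : ∀ᶠ t in 𝓝[>] 0,
      f h - (Φ v - Φ u) - (FA (u + t • h) - FA u) / t ≤ clarkeQuotient Ψ h (u, t) := by
    filter_upwards [Ioo_mem_nhdsGT one_pos] with t ⟨ht0, ht1⟩
    have hpt : u + t • h = (1 - t) • u + t • v := by simp only [h]; module
    have hEt : E u ≤ E (u + t • h) := hmin (hpt ▸ hK hu hv (by linarith) ht0.le (by ring))
    have hΦt : Φ (u + t • h) ≤ (1 - t) * Φ u + t * Φ v :=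
      hpt ▸ hΦ.2 (mem_univ u) (mem_univ v) (by linarith) ht0.le (by ring)
    rw [hE, hE, map_add, map_smul, smul_eq_mul] at hEt
    rw [clarkeQuotient, le_div_iff₀ ht0, sub_mul, div_mul_cancel₀ _ ht0.ne']
    linear_combination hEt + hΦt
  have hlim : Tendsto (fun t => f h - (Φ v - Φ u) - (FA (u + t • h) - FA u) / t) (𝓝[>] 0)
      (𝓝 (f h - (Φ v - Φ u) - A u h)) :=
    tendsto_const_nhds.sub ((hFA u h).mono_left (nhdsWithin_mono _ fun t ht => ne_of_gt ht))
  linarith [hΨ.le_clarkeDeriv_of_tendsto (tendsto_const_nhds.prodMk tendsto_id) hlim hr]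

end Energy

theorem stmt7_general {V : Type*} [NormedAddCommGroup V] [InnerProductSpace ℝ V] [CompleteSpace V]
    (K : Set V) (hKne : K.Nonempty) (hKcl : IsClosed K) (hKcv : Convex ℝ K)
    (A : V → (V →L[ℝ] ℝ))
    (mA : ℝ)
    (hAmon : ∀ v₁ v₂ : V, (A v₁ - A v₂) (v₁ - v₂) ≥ mA * ‖v₁ - v₂‖ ^ 2)
    (Φ : V → ℝ) (hΦcv : ConvexOn ℝ Set.univ Φ) (hΦcont : Continuous Φ)
    (Ψ : V → ℝ)
    (hΨlip : ∀ u : V, ∃ (L : NNReal) (s : Set V), s ∈ 𝓝 u ∧ LipschitzOnWith L Ψ s)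
    (αΨ : ℝ) (hαΨ : 0 ≤ αΨ)
    (hΨmon : ∀ v₁ v₂ : V,
      clarkeDeriv Ψ v₁ (v₂ - v₁) + clarkeDeriv Ψ v₂ (v₁ - v₂) ≤ αΨ * ‖v₁ - v₂‖ ^ 2)
    (f : V →L[ℝ] ℝ) (hsmall : αΨ < mA)
    (FA : V → ℝ)
    (hFA : ∀ u v : V,
      Tendsto (fun t : ℝ => (FA (u + t • v) - FA u) / t) (𝓝[≠] (0:ℝ)) (𝓝 (A u v)))
    (E : V → ℝ) (hE : ∀ v : V, E v = FA v + Φ v + Ψ v - f v) :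
    (∃! u : V, u ∈ K ∧ ∀ v ∈ K, E u ≤ E v) ∧
    (∀ u : V, (u ∈ K ∧ ∀ v ∈ K, E u ≤ E v) ↔
      (u ∈ K ∧ ∀ v ∈ K,
        (A u) (v - u) + Φ v - Φ u + clarkeDeriv Ψ u (v - u) ≥ f (v - u))) := by
  have hΨ : LocallyLipschitz Ψ := hΨlip
  have hgrowth := energy_lower_bound hFA hAmon hΨ hαΨ hΨmon hE
  have hc : 0 < (mA - αΨ) / 2 := by linarith
  have hlsc : LowerSemicontinuous E := by
    have hrest : Continuous fun v => Φ v + Ψ v - f v := by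
      have := hΨ.continuous
      fun_prop
    rw [show E = fun v => FA v + (Φ v + Ψ v - f v) from funext fun v => by rw [hE]; ring]
    exact (IsPotential.lowerSemicontinuous hFA hAmon).add hrest.lowerSemicontinuous
  refine ⟨existsUnique_isMinOn_of_midpoint_le hKne hKcl hKcv hlsc
    ((bddBelow_range_energy hgrowth hc hΦcv hΦcont hΨ).mono (image_subset_range _ _))
    (by positivity) (fun x _ y _ => energy_midpoint_le hgrowth hΦcv hΨ x y), fun u => ⟨?_, ?_⟩⟩
  · exact fun ⟨hu, hmin⟩ => ⟨hu, vhi_of_isMinOn hKcv hFA hΦcv hΨ hE hu hmin⟩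
  · rintro ⟨hu, hvhi⟩
    refine ⟨hu, fun v hv => ?_⟩
    nlinarith [hgrowth u v, hvhi v hv, mul_nonneg hc.le (sq_nonneg ‖v - u‖)]

theorem stmt7 {V : Type*} [NormedAddCommGroup V] [InnerProductSpace ℝ V] [CompleteSpace V]
    (K : Set V) (hKne : K.Nonempty) (hKcl : IsClosed K) (hKcv : Convex ℝ K)
    (A : V → (V →L[ℝ] ℝ)) (LA : ℝ) (hLA : 0 < LA)
    (hALip : ∀ v₁ v₂ : V, ‖A v₁ - A v₂‖ ≤ LA * ‖v₁ - v₂‖)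
    (mA : ℝ) (hmA : 0 < mA)
    (hAmon : ∀ v₁ v₂ : V, (A v₁ - A v₂) (v₁ - v₂) ≥ mA * ‖v₁ - v₂‖ ^ 2)
    (Φ : V → ℝ) (hΦcv : ConvexOn ℝ Set.univ Φ) (hΦcont : Continuous Φ)
    (Ψ : V → ℝ)
    (hΨlip : ∀ u : V, ∃ (L : NNReal) (s : Set V), s ∈ 𝓝 u ∧ LipschitzOnWith L Ψ s)
    (αΨ : ℝ) (hαΨ : 0 ≤ αΨ)
    (hΨmon : ∀ v₁ v₂ : V,
      clarkeDeriv Ψ v₁ (v₂ - v₁) + clarkeDeriv Ψ v₂ (v₁ - v₂) ≤ αΨ * ‖v₁ - v₂‖ ^ 2)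
    (f : V →L[ℝ] ℝ) (hsmall : αΨ < mA)
    (FA : V → ℝ)
    (hFA : ∀ u v : V,
      Tendsto (fun t : ℝ => (FA (u + t • v) - FA u) / t) (𝓝[≠] (0:ℝ)) (𝓝 (A u v)))
    (E : V → ℝ) (hE : ∀ v : V, E v = FA v + Φ v + Ψ v - f v) :
    (∃! u : V, u ∈ K ∧ ∀ v ∈ K, E u ≤ E v) ∧
    (∀ u : V, (u ∈ K ∧ ∀ v ∈ K, E u ≤ E v) ↔
      (u ∈ K ∧ ∀ v ∈ K,
        (A u) (v - u) + Φ v - Φ u + clarkeDeriv Ψ u (v - u) ≥ f (v - u))) :=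
  stmt7_general K hKne hKcl hKcv A mA hAmon Φ hΦcv hΦcont Ψ hΨlip αΨ hαΨ hΨmon f hsmall FA hFA E hE
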